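/- Let μ > 0, ν > 0, let M ≥ 1 be an integer, and let 0 ≤ j ≤ M−1. Then the ℓ² inner product of the two-mode states |ĵ_{2μ}⟩ and |ĵ_{2ν}⟩ satisfies Σ_{(m,n) ∈ ℕ×ℕ} g_{j,2μ}(m,n)·g_{j,2ν}(m,n) = (Σ_{k=0}^∞ √(P_{j+Mk|2μ}·P_{j+Mk|2ν})) / √(\tildeP_{j|2μ}·\tildeP_{j|2ν}). (This is the fidelity F^j_{μν} between the decoy- and code-mode photon-number-class states used in the linear-programming constraints of the paper.) -/

import Mathlib

noncomputable def poisson (lam : ℝ) (j : ℕ) : ℝ :=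
  Real.exp (-lam) * lam ^ j / (Nat.factorial j : ℝ)

noncomputable def tildeP (M : ℕ) (lam : ℝ) (j : ℕ) : ℝ :=
  ∑' n : ℕ, poisson lam (j + M * n)

noncomputable def g (M : ℕ) (lam : ℝ) (j : ℕ) (p : ℕ × ℕ) : ℝ :=
  if (p.1 + p.2) % M = j % M then
    Real.sqrt (poisson lam (p.1 + p.2) / tildeP M lam j)
      * Real.sqrt ((Nat.factorial (p.1 + p.2) : ℝ)
          / (2 ^ (p.1 + p.2) * Nat.factorial p.1 * Nat.factorial p.2))
  else 0

lemma poisson_nonneg {lam : ℝ} (h : 0 ≤ lam) (j : ℕ) : 0 ≤ poisson lam j :=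
  div_nonneg (mul_nonneg (Real.exp_pos _).le (pow_nonneg h _)) (Nat.cast_nonneg _)

lemma poisson_pos {lam : ℝ} (h : 0 < lam) (j : ℕ) : 0 < poisson lam j :=
  div_pos (mul_pos (Real.exp_pos _) (pow_pos h _)) (by exact_mod_cast j.factorial_pos)

lemma summable_poisson (lam : ℝ) : Summable (poisson lam) := by
  have := (Real.summable_pow_div_factorial lam).mul_left (Real.exp (-lam))
  refine this.congr fun n => ?_
  simp [poisson, mul_div_assoc]

lemma summable_poisson_comp (lam : ℝ) (M j : ℕ) (hM : 1 ≤ M) :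
    Summable (fun n : ℕ => poisson lam (j + M * n)) :=
  (summable_poisson lam).comp_injective
    (fun x y h => Nat.eq_of_mul_eq_mul_left hM (Nat.add_left_cancel h))

lemma tildeP_pos {lam : ℝ} (h : 0 < lam) {M : ℕ} (hM : 1 ≤ M) (j : ℕ) :
    0 < tildeP M lam j := by
  have hs := summable_poisson_comp lam M j hM
  have h0 : poisson lam (j + M * 0) ≤ tildeP M lam j :=
    Summable.le_tsum hs 0 (fun i _ => poisson_nonneg h.le _)
  simpa using lt_of_lt_of_le (poisson_pos h (j + M * 0)) h0

noncomputable def sigEquiv : (Σ s : ℕ, Fin (s+1)) ≃ ℕ × ℕ where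
  toFun x := (x.2.1, x.1 - x.2.1)
  invFun p := ⟨p.1 + p.2, ⟨p.1, Nat.lt_succ_of_le (Nat.le_add_right _ _)⟩⟩
  left_inv := fun ⟨s, m⟩ => by
    have hm : m.1 ≤ s := Nat.lt_succ_iff.mp m.2
    refine Sigma.ext (by simp; omega) ?_
    simp only
    rw [Fin.heq_ext_iff (by simp; omega)]
  right_inv := fun p => by simp

/-- The fidelity `F^j_{μν}` between the photon-number-class states `|ĵ_{2μ}⟩` and
`|ĵ_{2ν}⟩`:
`Σ_{(m,n)} g_{j,2μ}(m,n) g_{j,2ν}(m,n)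
  = (Σ_k √(P_{j+Mk|2μ} P_{j+Mk|2ν})) / √(tildeP_{j|2μ} tildeP_{j|2ν})`. -/
theorem g_inner_fidelity (μ ν : ℝ) (hμ : 0 < μ) (hν : 0 < ν)
    (M : ℕ) (hM : 1 ≤ M) (j : ℕ) (hj : j ≤ M - 1) :
    ∑' p : ℕ × ℕ, g M (2 * μ) j p * g M (2 * ν) j p =
      (∑' k : ℕ, Real.sqrt (poisson (2 * μ) (j + M * k) * poisson (2 * ν) (j + M * k)))
        / Real.sqrt (tildeP M (2 * μ) j * tildeP M (2 * ν) j) := by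
  have hμ2 : (0:ℝ) < 2 * μ := by linarith
  have hν2 : (0:ℝ) < 2 * ν := by linarith
  set a := 2 * μ
  set b := 2 * ν
  have hTμ : 0 < tildeP M a j := tildeP_pos hμ2 hM j
  have hTν : 0 < tildeP M b j := tildeP_pos hν2 hM j
  set T := Real.sqrt (tildeP M a j * tildeP M b j) with hT
  have hTpos : 0 < T := Real.sqrt_pos.mpr (mul_pos hTμ hTν)
  set c : ℕ → ℝ := fun s =>
    if s % M = j % M then Real.sqrt (poisson a s * poisson b s) / T else 0 with hc
  have hcnn : ∀ s, 0 ≤ c s := by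
    intro s; simp only [hc]; split
    · positivity
    · exact le_rfl
  -- key pointwise identity
  have key : ∀ p : ℕ × ℕ, g M a j p * g M b j p
      = c (p.1 + p.2) * ((p.1 + p.2).choose p.1 / 2 ^ (p.1 + p.2)) := by
    rintro ⟨m, n⟩
    simp only [g, hc]
    split
    · have hw : (0:ℝ) ≤ ((m+n).factorial : ℝ) / (2 ^ (m+n) * m.factorial * n.factorial) := by
        positivity
      rw [show ∀ x y z : ℝ, x * z * (y * z) = (x * y) * (z * z) by intros; ring]
      rw [Real.mul_self_sqrt hw,
        ← Real.sqrt_mul (div_nonneg (poisson_nonneg hμ2.le _) hTμ.le),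
        div_mul_div_comm,
        Real.sqrt_div (mul_nonneg (poisson_nonneg hμ2.le _) (poisson_nonneg hν2.le _))]
      congr 1
      have hnat : (m+n).choose m * m.factorial * n.factorial = (m+n).factorial := by
        rw [Nat.choose_symm_add]
        exact Nat.add_choose_mul_factorial_mul_factorial m n
      have hfac : ((m+n).factorial : ℝ)
          = ((m+n).choose m : ℝ) * m.factorial * n.factorial := by
        exact_mod_cast hnat.symm
      rw [hfac]
      have h1 : (m.factorial : ℝ) ≠ 0 := by positivity
      have h2 : (n.factorial : ℝ) ≠ 0 := by positivity
      field_simp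
    · simp
  set f : ℕ × ℕ → ℝ := fun p => g M a j p * g M b j p with hf
  set F : (Σ s : ℕ, Fin (s+1)) → ℝ := fun x => f (sigEquiv x) with hF
  have hFval : ∀ (s : ℕ) (i : Fin (s+1)), F ⟨s, i⟩ = c s * (s.choose i.1 / 2 ^ s) := by
    rintro s ⟨i, hi⟩
    have hle : i ≤ s := Nat.lt_succ_iff.mp hi
    have : i + (s - i) = s := by omega
    simp only [hF, hf, sigEquiv, Equiv.coe_fn_mk, key, this]
  have hFnn : ∀ x, 0 ≤ F x := by
    rintro ⟨s, i⟩
    rw [hFval]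
    have := hcnn s
    positivity
  -- inner finite sums
  have hinner : ∀ s : ℕ, ∑' i : Fin (s+1), F ⟨s, i⟩ = c s := by
    intro s
    rw [tsum_fintype]
    have : ∑ i : Fin (s+1), F ⟨s, i⟩ = ∑ i : Fin (s+1), c s * (s.choose i.1 / 2 ^ s) :=
      Finset.sum_congr rfl (fun i _ => hFval s i)
    rw [this, Fin.sum_univ_eq_sum_range (fun i => c s * (s.choose i / 2 ^ s)),
      ← Finset.mul_sum, ← Finset.sum_div]
    have : ∑ i ∈ Finset.range (s+1), (s.choose i : ℝ) = 2 ^ s := by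
      exact_mod_cast Nat.sum_range_choose s
    rw [this]
    field_simp
  -- summability of c
  have hcsum : Summable c := by
    refine Summable.of_nonneg_of_le hcnn ?_
      (((summable_poisson a).add (summable_poisson b)).div_const T)
    intro s
    have ha := poisson_nonneg hμ2.le s
    have hb := poisson_nonneg hν2.le s
    simp only [hc]
    split
    · have hbound : Real.sqrt (poisson a s * poisson b s)
          ≤ poisson a s + poisson b s := by
        have h2 : poisson a s * poisson b s ≤ (poisson a s + poisson b s)^2 := by nlinarith
        calc Real.sqrt (poisson a s * poisson b s)
            ≤ Real.sqrt ((poisson a s + poisson b s)^2) := Real.sqrt_le_sqrt h2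
          _ = poisson a s + poisson b s := Real.sqrt_sq (by linarith)
      gcongr
    · positivity
  have hFsum : Summable F := by
    rw [summable_sigma_of_nonneg hFnn]
    refine ⟨fun s => (hasSum_fintype _).summable, ?_⟩
    exact hcsum.congr (fun s => (hinner s).symm)
  -- chain
  calc ∑' p : ℕ × ℕ, f p
      = ∑' x, F x := (sigEquiv.tsum_eq f).symm
    _ = ∑' s : ℕ, ∑' i : Fin (s+1), F ⟨s, i⟩ := hFsum.tsum_sigma
    _ = ∑' s : ℕ, c s := tsum_congr hinner
    _ = ∑' k : ℕ, c (j + M * k) := by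
        refine (Function.Injective.tsum_eq
          (fun x y h => Nat.eq_of_mul_eq_mul_left hM (Nat.add_left_cancel h)) ?_).symm
        intro s hs
        simp only [Function.mem_support, hc] at hs
        have hmod : s % M = j % M := by
          by_contra h; exact hs (if_neg h)
        have hjM : j < M := by omega
        refine ⟨s / M, ?_⟩
        have h1 := Nat.mod_add_div s M
        have h2 : j % M = j := Nat.mod_eq_of_lt hjM
        simp only
        omega
    _ = (∑' k : ℕ, Real.sqrt (poisson a (j + M * k) * poisson b (j + M * k))) / T := by
        rw [← tsum_div_const]
        refine tsum_congr fun k => ?_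
        simp only [hc, Nat.add_mul_mod_self_left, if_pos]
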